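/- arXiv:1012.4734 — 2 statements merged into one kernel-verified Lean document; each statement's English description precedes it below -/
import Mathlib

section
/- If f : ℝ³ → ℝ is radial, satisfies f(x) = 1 - a₀/|x| for |x| ≥ R (some R > 0), and solves -Δf = 0 for |x| ≥ R, with -Δf + ½Vf = 0 on ℝ³ for compactly supported V (supp V ⊂ B_R), then ∫ V(x)f(x) dx = 8πa₀. -/
/-
Integrate `½ V f = Δf` over a cube `[-ρ, ρ]³` containing the support of `V` (a cube rather than a
ball, because the divergence theorem in Mathlib is stated for boxes). `∫ Δf` is the flux of `∇f`
through the faces, where `f = 1 - a₀/|x|` and hence `∇f = a₀ x/|x|³`. The flux through a pair of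
opposite faces is `2 a₀` times the solid angle `2π/3` subtended by one face, so the total flux is
`4π a₀`.
-/

open MeasureTheory

noncomputable section

abbrev E3 : Type := EuclideanSpace ℝ (Fin 3)

noncomputable def lap (f : E3 → ℝ) (x : E3) : ℝ :=
  ∑ i : Fin 3,
    fderiv ℝ (fun y => fderiv ℝ f y (EuclideanSpace.single i (1 : ℝ))) x
      (EuclideanSpace.single i (1 : ℝ))

open Real Filter Topology

lemma hasDerivAt_div_mul_sqrt_add_sq {k : ℝ} (hk : 0 < k) (s : ℝ) :
    HasDerivAt (fun s => s / (k * √(k + s ^ 2))) ((√(k + s ^ 2) ^ 3)⁻¹) s := by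
  have hpos : 0 < k + s ^ 2 := by positivity
  have hsq : √(k + s ^ 2) ^ 2 = k + s ^ 2 := sq_sqrt hpos.le
  have hsqrt : HasDerivAt (fun s => √(k + s ^ 2)) (s / √(k + s ^ 2)) s := by
    convert ((hasDerivAt_pow 2 s).const_add k).sqrt hpos.ne' using 1
    ring
  refine ((hasDerivAt_id' s).div (hsqrt.const_mul k) (by positivity)).congr_deriv ?_
  field_simp
  linear_combination hsq

lemma integral_inv_sqrt_add_sq_pow_three {k : ℝ} (hk : 0 < k) (ρ : ℝ) :
    ∫ s in -ρ..ρ, (√(k + s ^ 2) ^ 3)⁻¹ = 2 * ρ / (k * √(k + ρ ^ 2)) := by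
  have hcont : Continuous fun s : ℝ => (√(k + s ^ 2) ^ 3)⁻¹ :=
    (by fun_prop : Continuous fun s : ℝ => √(k + s ^ 2) ^ 3).inv₀ fun s => by positivity
  rw [intervalIntegral.integral_eq_sub_of_hasDerivAt
    (fun s _ => hasDerivAt_div_mul_sqrt_add_sq hk s) (hcont.intervalIntegrable _ _)]
  simp only [neg_sq]
  ring

lemma hasDerivAt_arctan_div_sqrt {ρ : ℝ} (hρ : ρ ≠ 0) (t : ℝ) :
    HasDerivAt (fun t => arctan (t / √(2 * ρ ^ 2 + t ^ 2)))
      (ρ ^ 2 / ((ρ ^ 2 + t ^ 2) * √(2 * ρ ^ 2 + t ^ 2))) t := by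
  have hpos : 0 < 2 * ρ ^ 2 + t ^ 2 := by positivity
  have hsq : √(2 * ρ ^ 2 + t ^ 2) ^ 2 = 2 * ρ ^ 2 + t ^ 2 := sq_sqrt hpos.le
  have hsqrt : HasDerivAt (fun t => √(2 * ρ ^ 2 + t ^ 2)) (t / √(2 * ρ ^ 2 + t ^ 2)) t := by
    convert ((hasDerivAt_pow 2 t).const_add (2 * ρ ^ 2)).sqrt hpos.ne' using 1
    ring
  refine ((hasDerivAt_id' t).div hsqrt (sqrt_pos.2 hpos).ne').arctan.congr_deriv ?_
  simp only [Pi.div_apply]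
  field_simp
  linear_combination t ^ 2 * hsq

lemma integral_sq_div_mul_sqrt {ρ : ℝ} (hρ : 0 < ρ) :
    ∫ t in -ρ..ρ, ρ ^ 2 / ((ρ ^ 2 + t ^ 2) * √(2 * ρ ^ 2 + t ^ 2)) = π / 3 := by
  have hcont : Continuous fun t : ℝ => ρ ^ 2 / ((ρ ^ 2 + t ^ 2) * √(2 * ρ ^ 2 + t ^ 2)) :=
    continuous_const.div (by fun_prop) fun t => by positivity
  rw [intervalIntegral.integral_eq_sub_of_hasDerivAt
    (fun t _ => hasDerivAt_arctan_div_sqrt hρ.ne' t) (hcont.intervalIntegrable _ _)]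
  have hend : ρ / √(2 * ρ ^ 2 + ρ ^ 2) = (√3)⁻¹ := by
    rw [show 2 * ρ ^ 2 + ρ ^ 2 = 3 * ρ ^ 2 by ring, sqrt_mul zero_le_three, sqrt_sq hρ.le]
    field_simp
  rw [neg_sq, neg_div, hend, arctan_neg, arctan_inv_sqrt_three]
  ring

lemma setIntegral_Icc_eq_intervalIntegral {f : ℝ → ℝ} {a b : ℝ} (hab : a ≤ b) :
    ∫ s in Set.Icc a b, f s = ∫ s in a..b, f s := by
  rw [integral_Icc_eq_integral_Ioc, intervalIntegral.integral_of_le hab]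

-- Each face of the cube `[-ρ, ρ]³` subtends the solid angle `4π / 6` at the origin.
lemma integral_square_inv_sqrt_pow_three {ρ : ℝ} (hρ : 0 < ρ) :
    ∫ p in Set.Icc (-ρ) ρ ×ˢ Set.Icc (-ρ) ρ, (√(ρ ^ 2 + (p.1 ^ 2 + p.2 ^ 2)) ^ 3)⁻¹
      = 2 * π / (3 * ρ) := by
  have hcont : Continuous fun p : ℝ × ℝ => (√(ρ ^ 2 + (p.1 ^ 2 + p.2 ^ 2)) ^ 3)⁻¹ :=
    (by fun_prop : Continuous fun p : ℝ × ℝ => √(ρ ^ 2 + (p.1 ^ 2 + p.2 ^ 2)) ^ 3).inv₀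
      fun p => by positivity
  have hinner (x : ℝ) : ∫ y in Set.Icc (-ρ) ρ, (√(ρ ^ 2 + (x ^ 2 + y ^ 2)) ^ 3)⁻¹
      = 2 / ρ * (ρ ^ 2 / ((ρ ^ 2 + x ^ 2) * √(2 * ρ ^ 2 + x ^ 2))) := by
    simp_rw [setIntegral_Icc_eq_intervalIntegral (neg_le_self hρ.le), ← add_assoc,
      integral_inv_sqrt_add_sq_pow_three (by positivity : 0 < ρ ^ 2 + x ^ 2)]
    field_simp
    ring_nf
  rw [Measure.volume_eq_prod, setIntegral_prod _ (hcont.continuousOn.integrableOn_compact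
    (isCompact_Icc.prod isCompact_Icc)), setIntegral_congr_fun measurableSet_Icc
    (fun x _ => hinner x), integral_const_mul,
    setIntegral_Icc_eq_intervalIntegral (neg_le_self hρ.le), integral_sq_div_mul_sqrt hρ]
  field_simp

lemma integral_Icc_fin_two_inv_sqrt_pow_three {ρ : ℝ} (hρ : 0 < ρ) :
    ∫ y in Set.Icc (fun _ => -ρ : Fin 2 → ℝ) (fun _ => ρ), (√(ρ ^ 2 + (y 0 ^ 2 + y 1 ^ 2)) ^ 3)⁻¹
      = 2 * π / (3 * ρ) := by
  have hpre : Set.Icc (fun _ => -ρ : Fin 2 → ℝ) (fun _ => ρ)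
      = MeasurableEquiv.finTwoArrow ⁻¹' (Set.Icc (-ρ) ρ ×ˢ Set.Icc (-ρ) ρ) := by
    ext y
    simp [Pi.le_def, Fin.forall_fin_two, and_and_and_comm]
  rw [hpre]
  exact ((volume_preserving_finTwoArrow ℝ).setIntegral_preimage_emb
    MeasurableEquiv.finTwoArrow.measurableEmbedding _ _).trans
    (integral_square_inv_sqrt_pow_three hρ)

lemma hasFDerivAt_inv_norm {E : Type*} [NormedAddCommGroup E] [InnerProductSpace ℝ E] {x : E}
    (hx : x ≠ 0) : HasFDerivAt (fun z => ‖z‖⁻¹) ((-(‖x‖ ^ 3)⁻¹) • innerSL ℝ x) x := by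
  have hnx : 0 < ‖x‖ := norm_pos_iff.2 hx
  have hnorm : HasFDerivAt (fun z : E => ‖z‖) (‖x‖⁻¹ • innerSL ℝ x) x := by
    have := (hasStrictFDerivAt_norm_sq x).hasFDerivAt.sqrt (by positivity)
    simp only [sqrt_sq (norm_nonneg _)] at this
    convert this using 1
    match_scalars
    field_simp
  refine ((hasDerivAt_inv hnx.ne').comp_hasFDerivAt x hnorm).congr_fderiv ?_
  rw [smul_smul]
  congr 1
  ring

lemma fderiv_apply_single_eq_of_eventuallyEq {ι : Type*} [Fintype ι] [DecidableEq ι]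
    {f : EuclideanSpace ℝ ι → ℝ} {a₀ : ℝ} {z : EuclideanSpace ℝ ι} (hz : z ≠ 0)
    (hf : f =ᶠ[𝓝 z] fun w => 1 - a₀ / ‖w‖) (i : ι) :
    fderiv ℝ f z (EuclideanSpace.single i 1) = a₀ * z i / ‖z‖ ^ 3 := by
  have hderiv := ((hasFDerivAt_inv_norm hz).const_mul a₀).const_sub 1
  simp only [← div_eq_mul_inv] at hderiv
  rw [(hderiv.congr_of_eventuallyEq hf).fderiv]
  simp only [neg_smul, smul_neg, neg_neg, smul_apply, coe_innerSL_apply,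
    EuclideanSpace.inner_single_right, conj_trivial, smul_eq_mul]
  ring

lemma EuclideanSpace.norm_toLp_insertNth_sq {n : ℕ} (i : Fin (n + 1)) (c : ℝ) (y : Fin n → ℝ) :
    ‖(WithLp.toLp 2 (i.insertNth c y) : EuclideanSpace ℝ (Fin (n + 1)))‖ ^ 2
      = c ^ 2 + ∑ j, y j ^ 2 := by
  rw [EuclideanSpace.real_norm_sq_eq, Fin.sum_univ_succAbove _ i]
  simp

lemma EuclideanSpace.mem_Icc_of_norm_toLp_le {ι : Type*} [Fintype ι] {y : ι → ℝ} {ρ : ℝ}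
    (hy : ‖(WithLp.toLp 2 y : EuclideanSpace ℝ ι)‖ ≤ ρ) :
    y ∈ Set.Icc (fun _ => -ρ) (fun _ => ρ) := by
  have (i : ι) : |y i| ≤ ρ := (PiLp.norm_apply_le (WithLp.toLp 2 y) i).trans hy
  exact ⟨fun i => (abs_le.1 (this i)).1, fun i => (abs_le.1 (this i)).2⟩

lemma EuclideanSpace.integral_eq_setIntegral_Icc {ι : Type*} [Fintype ι]
    {g : EuclideanSpace ℝ ι → ℝ} {ρ : ℝ} (hg : ∀ x, ρ < ‖x‖ → g x = 0) :
    ∫ x, g x = ∫ y in Set.Icc (fun _ => -ρ) (fun _ => ρ), g (WithLp.toLp 2 y) := by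
  rw [← (EuclideanSpace.volume_preserving_symm_measurableEquiv_toLp ι).symm.integral_comp',
    setIntegral_eq_integral_of_forall_compl_eq_zero]
  · rfl
  intro y hy
  exact hg _ (lt_of_not_ge fun h => hy (EuclideanSpace.mem_Icc_of_norm_toLp_le h))

lemma integral_sum_fderiv_fderiv_single_Icc {n : ℕ} {f : EuclideanSpace ℝ (Fin (n + 1)) → ℝ}
    (hf : ContDiff ℝ 2 f) {a b : Fin (n + 1) → ℝ} (hle : a ≤ b) :
    ∫ y in Set.Icc a b, ∑ i, fderiv ℝ (fun z => fderiv ℝ f z (EuclideanSpace.single i 1))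
        (WithLp.toLp 2 y) (EuclideanSpace.single i 1)
      = ∑ i, ((∫ y in Set.Icc (a ∘ i.succAbove) (b ∘ i.succAbove),
          fderiv ℝ f (WithLp.toLp 2 (i.insertNth (b i) y)) (EuclideanSpace.single i 1))
        - ∫ y in Set.Icc (a ∘ i.succAbove) (b ∘ i.succAbove),
          fderiv ℝ f (WithLp.toLp 2 (i.insertNth (a i) y)) (EuclideanSpace.single i 1)) := by
  let toLp := (EuclideanSpace.equiv (Fin (n + 1)) ℝ).symm
  let D : Fin (n + 1) → EuclideanSpace ℝ (Fin (n + 1)) → ℝ :=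
    fun i z => fderiv ℝ f z (EuclideanSpace.single i 1)
  have hD (i : Fin (n + 1)) : ContDiff ℝ 1 (D i) :=
    (hf.fderiv_right le_rfl).clm_apply contDiff_const
  have hD' (i : Fin (n + 1)) :
      Continuous (fun z => fderiv ℝ (D i) z (EuclideanSpace.single i 1)) :=
    ((hD i).continuous_fderiv one_ne_zero).clm_apply continuous_const
  refine integral_divergence_of_hasFDerivAt_off_countable' a b hle (fun i y => D i (toLp y))
    (fun i y => (fderiv ℝ (D i) (toLp y)).comp toLp.toContinuousLinearMap) ∅ Set.countable_empty
    (fun i => ((hD i).continuous.comp toLp.continuous).continuousOn)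
    (fun y _ i => ((hD i).differentiable one_ne_zero _).hasFDerivAt.comp y toLp.hasFDerivAt)
    ((continuous_finsetSum _ fun i _ => (hD' i).comp toLp.continuous).continuousOn
      |>.integrableOn_compact isCompact_Icc)

lemma eventuallyEq_one_sub_div_norm {E : Type*} [NormedAddCommGroup E] {f : E → ℝ} {R a₀ : ℝ}
    (hout : ∀ x, R ≤ ‖x‖ → f x = 1 - a₀ / ‖x‖) {z : E} (hz : R < ‖z‖) :
    f =ᶠ[𝓝 z] fun w => 1 - a₀ / ‖w‖ := by
  filter_upwards [continuous_norm.continuousAt.eventually (lt_mem_nhds hz)] with w hw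
  exact hout w hw.le

lemma sum_face_integrals_fderiv_eq_four_pi_mul {f : E3 → ℝ} {R a₀ ρ : ℝ} (hρ : 0 < ρ)
    (hRρ : R < ρ) (hout : ∀ x : E3, R ≤ ‖x‖ → f x = 1 - a₀ / ‖x‖) :
    ∑ i : Fin 3, ((∫ y in Set.Icc ((fun _ => -ρ) ∘ i.succAbove) ((fun _ => ρ) ∘ i.succAbove),
          fderiv ℝ f (WithLp.toLp 2 (i.insertNth ρ y)) (EuclideanSpace.single i 1))
        - ∫ y in Set.Icc ((fun _ => -ρ) ∘ i.succAbove) ((fun _ => ρ) ∘ i.succAbove),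
          fderiv ℝ f (WithLp.toLp 2 (i.insertNth (-ρ) y)) (EuclideanSpace.single i 1))
      = 4 * π * a₀ := by
  have hface (i : Fin 3) {c : ℝ} (hc : c ^ 2 = ρ ^ 2) (y : Fin 2 → ℝ) :
      fderiv ℝ f (WithLp.toLp 2 (i.insertNth c y)) (EuclideanSpace.single i 1)
        = a₀ * c * (√(ρ ^ 2 + (y 0 ^ 2 + y 1 ^ 2)) ^ 3)⁻¹ := by
    set z : E3 := WithLp.toLp 2 (i.insertNth c y)
    have hz : ‖z‖ = √(ρ ^ 2 + (y 0 ^ 2 + y 1 ^ 2)) := by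
      rw [← sqrt_sq (norm_nonneg z), EuclideanSpace.norm_toLp_insertNth_sq, Fin.sum_univ_two, hc]
    have hρz : ρ ≤ ‖z‖ := by
      rw [hz]
      exact le_sqrt_of_sq_le (le_add_of_nonneg_right (by positivity))
    rw [fderiv_apply_single_eq_of_eventuallyEq (norm_pos_iff.1 (hρ.trans_le hρz))
      (eventuallyEq_one_sub_div_norm hout (hRρ.trans_le hρz)), hz]
    simp [z, div_eq_mul_inv]
  have hflux (i : Fin 3) : (∫ y in Set.Icc (fun _ => -ρ) (fun _ => ρ),
        fderiv ℝ f (WithLp.toLp 2 (i.insertNth ρ y)) (EuclideanSpace.single i 1))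
      - ∫ y in Set.Icc (fun _ => -ρ) (fun _ => ρ),
        fderiv ℝ f (WithLp.toLp 2 (i.insertNth (-ρ) y)) (EuclideanSpace.single i 1)
      = 4 * π * a₀ / 3 := by
    simp_rw [hface i rfl, hface i (neg_sq ρ), integral_const_mul,
      integral_Icc_fin_two_inv_sqrt_pow_three hρ]
    field_simp
    ring
  simp only [Function.comp_def, hflux, Finset.sum_const, Finset.card_univ, Fintype.card_fin]
  ring

theorem scattering_length_formula_general (R a₀ : ℝ)
    (V f : E3 → ℝ)
    (hVsupp : ∀ x : E3, R ≤ ‖x‖ → V x = 0)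
    (hf : ContDiff ℝ 2 f)
    (hscatt : ∀ x : E3, -lap f x + (1 / 2) * V x * f x = 0)
    (hout : ∀ x : E3, R ≤ ‖x‖ → f x = 1 - a₀ / ‖x‖) :
    ∫ x : E3, V x * f x = 8 * Real.pi * a₀ := by
  obtain ⟨ρ, hRρ, hρ⟩ : ∃ ρ, R < ρ ∧ 0 < ρ :=
    ⟨max R 0 + 1, by linarith [le_max_left R 0], by linarith [le_max_right R 0]⟩
  have hVf (x : E3) : V x * f x = 2 * lap f x := by linarith [hscatt x]
  have hlap_out (x : E3) (hx : ρ < ‖x‖) : lap f x = 0 := by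
    have := hVf x
    rw [hVsupp x (hRρ.trans hx).le, zero_mul] at this
    linarith
  have hle : (fun _ => -ρ : Fin 3 → ℝ) ≤ fun _ => ρ := fun _ => by linarith
  calc ∫ x : E3, V x * f x
      = 2 * ∫ x : E3, lap f x := by simp_rw [hVf, integral_const_mul]
    _ = 2 * ∫ y in Set.Icc (fun _ => -ρ) (fun _ => ρ), lap f (WithLp.toLp 2 y) := by
      rw [EuclideanSpace.integral_eq_setIntegral_Icc hlap_out]
    _ = 2 * (4 * π * a₀) := congrArg (2 * ·)
      ((integral_sum_fderiv_fderiv_single_Icc hf hle).trans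
        (sum_face_integrals_fderiv_eq_four_pi_mul hρ hRρ hout))
    _ = 8 * π * a₀ := by ring

/-- If `f` is radial, equals `1 - a₀/|x|` (and is harmonic) for `|x| ≥ R`, and solves the
zero-energy scattering equation `(-Δ + ½V)f = 0` on `ℝ³` for a bounded potential `V`
supported in `B_R`, then `∫ V f = 8π a₀`. -/
theorem scattering_length_formula (R a₀ : ℝ) (hR : 0 < R)
    (V f : E3 → ℝ) (hVmeas : Measurable V) (C : ℝ) (hVbdd : ∀ x, |V x| ≤ C)
    (hVsupp : ∀ x : E3, R ≤ ‖x‖ → V x = 0)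
    (hfrad : ∀ x y : E3, ‖x‖ = ‖y‖ → f x = f y)
    (hf : ContDiff ℝ 2 f)
    (hscatt : ∀ x : E3, -lap f x + (1 / 2) * V x * f x = 0)
    (hout : ∀ x : E3, R ≤ ‖x‖ → f x = 1 - a₀ / ‖x‖) :
    ∫ x : E3, V x * f x = 8 * Real.pi * a₀ :=
  scattering_length_formula_general R a₀ V f hVsupp hf hscatt hout
end
end

section
/- For any nonnegative trace-class operator γ on H and unit vector φ, the trace norm satisfies ‖γ - |φ⟩⟨φ|‖₁ ≤ 2·√(Tr γ) · √(Tr γ - ⟨φ, γφ⟩) + |Tr γ - 1|; in particular, if Tr γ = 1 then 1 - ⟨φ, γφ⟩ → 0 implies γ → |φ⟩⟨φ| in trace norm with explicit rate ‖γ - |φ⟩⟨φ|‖₁ ≤ 2√(1 - ⟨φ,γφ⟩). -/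
/-!
Write `A = γ - |φ⟩⟨φ| = A⁺ - A⁻`. Since `A ≥ -|φ⟩⟨φ|`, a vector `v` in the range of `A⁻` with
`⟪φ, v⟫ = 0` would satisfy `0 ≤ ⟪v, γ v⟫ = ⟪v, A v⟫ = -⟪v, A⁻ v⟫ ≤ 0`; hence `A⁻ = μ |ψ⟩⟨ψ|` has
rank at most one and `A ψ = -μ ψ`. Splitting `ψ = c φ + w` with `w ⊥ φ`, the reverse triangle
inequality for `√γ ψ = c √γ φ + √γ w` and `⟪w, γ w⟫ ≤ ‖w‖² (Tr γ - ⟪φ, γ φ⟫)` (test the trace on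
the orthonormal pair `φ, w / ‖w‖`) turn `μ = |c|² - ⟪ψ, γ ψ⟫` into
`μ ≤ √(Tr γ) √(Tr γ - ⟪φ, γ φ⟫) + (1 - Tr γ)⁺`.
Finally `‖A‖₁ ≤ Tr A⁺ + Tr A⁻` with `Tr A⁻ = μ` and `Tr A⁺ = Tr γ - 1 + μ`.
-/

open MeasureTheory Filter ENNReal
open scoped InnerProductSpace

noncomputable section

variable {H : Type*} [NormedAddCommGroup H] [InnerProductSpace ℂ H] [CompleteSpace H]

/-- The rank-one projection `|φ⟩⟨φ| : x ↦ ⟨φ, x⟩ φ`. -/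
noncomputable def projOp (φ : H) : H →L[ℂ] H :=
  (innerSL ℂ φ).smulRight φ

/-- Trace norm, as a supremum over finite orthonormal systems. -/
noncomputable def traceNorm (A : H →L[ℂ] H) : ℝ≥0∞ :=
  ⨆ (n : ℕ) (e : Fin n → H) (f : Fin n → H)
    (_ : Orthonormal ℂ e) (_ : Orthonormal ℂ f),
    ENNReal.ofReal (∑ i, ‖⟪e i, A (f i)⟫_ℂ‖)

/-- Trace of a nonnegative operator, as a supremum over finite orthonormal systems. -/
noncomputable def opTrace (A : H →L[ℂ] H) : ℝ≥0∞ :=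
  ⨆ (n : ℕ) (e : Fin n → H) (_ : Orthonormal ℂ e),
    ENNReal.ofReal (∑ i, (⟪e i, A (e i)⟫_ℂ).re)

-- `x = ‖⟪φ, ψ⟫‖`, `y = ‖ψ - ⟪φ, ψ⟫ φ‖`, `s = √⟪φ, γ φ⟫`, `r = √(Tr γ - ⟪φ, γ φ⟫)`, `q = √(Tr γ)`,
-- and `u = ‖√γ (ψ - ⟪φ, ψ⟫ φ)‖` in the application.
theorem sq_sub_sq_sub_le {x y s r q u : ℝ} (hx : 0 ≤ x) (hs : 0 ≤ s) (hr : 0 ≤ r) (hq : 0 ≤ q)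
    (hxy : x ^ 2 + y ^ 2 = 1) (hq2 : q ^ 2 = s ^ 2 + r ^ 2) (hu : u ≤ y * r) :
    x ^ 2 - (x * s - u) ^ 2 ≤ q * r + max (1 - q ^ 2) 0 := by
  have hx1 : x ≤ 1 := by nlinarith
  have hmax : x ^ 2 * (1 - q ^ 2) ≤ max (1 - q ^ 2) 0 := by
    rcases le_total 0 (1 - q ^ 2) with h | h
    · exact (mul_le_of_le_one_left h (by nlinarith)).trans (le_max_left _ _)
    · exact (mul_nonpos_of_nonneg_of_nonpos (sq_nonneg x) h).trans (le_max_right _ _)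
  suffices x ^ 2 * r ^ 2 + 2 * x * s * u - u ^ 2 ≤ q * r by nlinarith
  rcases le_total (x * s) (y * r) with h | h
  · have hxq : x * q ≤ r := by
      refine (pow_le_pow_iff_left₀ (by positivity) hr two_ne_zero).1 ?_
      nlinarith [mul_self_le_mul_self (by positivity) h]
    nlinarith [sq_nonneg (u - x * s), mul_le_mul hx1 hxq (by positivity) zero_le_one]
  · -- `(x² - y², 2xy)` is a unit vector, so Cauchy–Schwarz bounds its pairing with `(r, s)` by `q`.
    have hL : r * (x ^ 2 - y ^ 2) + s * (2 * x * y) ≤ q := by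
      have hid : (r * (x ^ 2 - y ^ 2) + s * (2 * x * y)) ^ 2
          + (s * (x ^ 2 - y ^ 2) - r * (2 * x * y)) ^ 2 = q ^ 2 := by
        rw [hq2]; linear_combination (s ^ 2 + r ^ 2) * (x ^ 2 + y ^ 2 + 1) * hxy
      refine (abs_le_of_sq_le_sq' ?_ hq).2
      nlinarith [sq_nonneg (s * (x ^ 2 - y ^ 2) - r * (2 * x * y))]
    nlinarith [mul_nonneg (sub_nonneg.2 hu) (sub_nonneg.2 (hu.trans h))]

theorem max_add_le_two_mul_add_abs {T Q μ : ℝ} (hQ : 0 ≤ Q) (hμ : μ ≤ Q + max (1 - T) 0) :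
    max (T - 1 + μ) 0 + μ ≤ 2 * Q + |T - 1| := by
  rcases le_total 1 T with h | h
  · rw [max_eq_right (by linarith : 1 - T ≤ 0)] at hμ
    rw [abs_of_nonneg (by linarith : 0 ≤ T - 1)]
    rcases le_total 0 (T - 1 + μ) with h' | h' <;> simp [h'] <;> linarith
  · rw [max_eq_left (by linarith : 0 ≤ 1 - T)] at hμ
    rw [abs_of_nonpos (by linarith : T - 1 ≤ 0)]
    rcases le_total 0 (T - 1 + μ) with h' | h' <;> simp [h'] <;> linarith

section Orthonormal

variable {𝕜 E : Type*} [RCLike 𝕜] [NormedAddCommGroup E] [InnerProductSpace 𝕜 E]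

theorem orthonormal_vec_singleton {φ : E} (hφ : ‖φ‖ = 1) : Orthonormal 𝕜 ![φ] := by
  rw [orthonormal_iff_ite]
  intro i j
  fin_cases i; fin_cases j
  simp [inner_self_eq_norm_sq_to_K, hφ]

theorem Orthonormal.snoc {n : ℕ} {e : Fin n → E} (he : Orthonormal 𝕜 e) {v : E}
    (hv : ‖v‖ = 1) (hev : ∀ i, ⟪e i, v⟫_𝕜 = 0) : Orthonormal 𝕜 (Fin.snoc e v) := by
  have hve : ∀ i, ⟪v, e i⟫_𝕜 = 0 := fun i => inner_eq_zero_symm.1 (hev i)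
  rw [orthonormal_iff_ite] at he ⊢
  intro i j
  induction i using Fin.lastCases <;> induction j using Fin.lastCases <;>
    simp [inner_self_eq_norm_sq_to_K, hv, hev, hve, he, Fin.castSucc_ne_last,
      (Fin.castSucc_ne_last _).symm]

theorem Orthonormal.sum_norm_inner_mul_norm_inner_le {ι : Type*} [Fintype ι] {e f : ι → E}
    (he : Orthonormal 𝕜 e) (hf : Orthonormal 𝕜 f) (u v : E) :
    ∑ i, ‖⟪e i, u⟫_𝕜‖ * ‖⟪v, f i⟫_𝕜‖ ≤ ‖u‖ * ‖v‖ := by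
  calc ∑ i, ‖⟪e i, u⟫_𝕜‖ * ‖⟪v, f i⟫_𝕜‖
      ≤ √(∑ i, ‖⟪e i, u⟫_𝕜‖ ^ 2) * √(∑ i, ‖⟪f i, v⟫_𝕜‖ ^ 2) := by
        simp only [norm_inner_symm v]
        exact Real.sum_mul_le_sqrt_mul_sqrt _ _ _
    _ ≤ √(‖u‖ ^ 2) * √(‖v‖ ^ 2) := by
        gcongr
        · exact he.sum_inner_products_le u
        · exact hf.sum_inner_products_le v
    _ = ‖u‖ * ‖v‖ := by simp

theorem Orthonormal.exists_extension_sq_norm_le_sum {n : ℕ} {e : Fin n → E}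
    (he : Orthonormal 𝕜 e) (x : E) :
    ∃ (m : ℕ) (g : Fin m → E), Orthonormal 𝕜 g ∧ ‖x‖ ^ 2 ≤ ∑ j, ‖⟪g j, x⟫_𝕜‖ ^ 2 ∧
      ∀ F : E → ℝ, (∀ v, 0 ≤ F v) → ∑ i, F (e i) ≤ ∑ j, F (g j) := by
  obtain ⟨r, hr_def⟩ : ∃ r, r = x - ∑ i, ⟪e i, x⟫_𝕜 • e i := ⟨_, rfl⟩
  have hr : ∀ i, ⟪e i, r⟫_𝕜 = 0 := fun i => by
    rw [hr_def, inner_sub_right, he.inner_right_fintype, sub_self]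
  have hrx : ⟪r, x⟫_𝕜 = ‖r‖ ^ 2 := by
    have : ⟪r, ∑ i, ⟪e i, x⟫_𝕜 • e i⟫_𝕜 = 0 := by
      simp [inner_sum, inner_smul_right, inner_eq_zero_symm.1 (hr _)]
    rw [← inner_self_eq_norm_sq_to_K]
    nth_rw 3 [hr_def]
    rw [inner_sub_right, this, sub_zero]
  have hpyth : ‖x‖ ^ 2 = ∑ i, ‖⟪e i, x⟫_𝕜‖ ^ 2 + ‖r‖ ^ 2 := by
    have h := congrArg RCLike.re (inner_sub_left (𝕜 := 𝕜) x (∑ i, ⟪e i, x⟫_𝕜 • e i) x)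
    rw [← hr_def, hrx, sum_inner] at h
    simp only [inner_smul_left, RCLike.conj_mul, map_sub, map_sum] at h
    rw [inner_self_eq_norm_sq_to_K] at h
    norm_cast at h
    linarith
  rcases eq_or_ne r 0 with h0 | h0
  · exact ⟨n, e, he, by simp [hpyth, h0], fun F _ => le_rfl⟩
  have hr0 : ‖r‖ ≠ 0 := norm_ne_zero_iff.2 h0
  set χ := ((‖r‖⁻¹ : ℝ) : 𝕜) • r
  have hχ : ‖χ‖ = 1 := by simp [χ, norm_smul, inv_mul_cancel₀ hr0]
  have hχx : ‖⟪χ, x⟫_𝕜‖ = ‖r‖ := by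
    rw [inner_smul_left, hrx, norm_mul]
    simp [sq, hr0]
  refine ⟨n + 1, Fin.snoc e χ, he.snoc hχ fun i => ?_, ?_, fun F hF => ?_⟩
  · rw [inner_smul_right, hr, mul_zero]
  · simp [Fin.sum_univ_castSucc, hχx, hpyth]
  · simpa [Fin.sum_univ_castSucc] using hF χ

theorem apply_eq_smul_of_inner_apply_eq_zero {F : Type*} [FunLike F E E] [LinearMapClass F 𝕜 E E]
    {B : F} {φ u₀ : E}
    (h : ∀ u, ⟪φ, B u⟫_𝕜 = 0 → B u = 0) (hu₀ : ⟪φ, B u₀⟫_𝕜 ≠ 0) (u : E) :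
    B u = (⟪φ, B u⟫_𝕜 / ⟪φ, B u₀⟫_𝕜) • B u₀ := by
  have := h (⟪φ, B u⟫_𝕜 • u₀ - ⟪φ, B u₀⟫_𝕜 • u) (by
    simp only [map_sub, map_smul, inner_sub_right, inner_smul_right]; ring)
  rw [map_sub, map_smul, map_smul, sub_eq_zero] at this
  rw [div_eq_inv_mul, mul_smul, this, smul_smul, inv_mul_cancel₀ hu₀, one_smul]

end Orthonormal

section

variable {E : Type*} [NormedAddCommGroup E] [InnerProductSpace ℂ E]

@[simp]
theorem projOp_apply (φ x : E) : projOp φ x = ⟪φ, x⟫_ℂ • φ := rfl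

theorem re_inner_projOp_self (φ x : E) : (⟪x, projOp φ x⟫_ℂ).re = ‖⟪φ, x⟫_ℂ‖ ^ 2 := by
  rw [projOp_apply, inner_smul_right, ← inner_conj_symm x φ, Complex.mul_conj,
    Complex.normSq_eq_norm_sq, Complex.ofReal_re]

theorem sum_norm_inner_projOp_le {ι : Type*} [Fintype ι] {e f : ι → E} (he : Orthonormal ℂ e)
    (hf : Orthonormal ℂ f) (ψ : E) : ∑ i, ‖⟪e i, projOp ψ (f i)⟫_ℂ‖ ≤ ‖ψ‖ ^ 2 := by
  simpa [inner_smul_right, mul_comm, sq] using he.sum_norm_inner_mul_norm_inner_le hf ψ ψ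

theorem traceNorm_le_ofReal {A : E →L[ℂ] E} {c : ℝ}
    (h : ∀ (n : ℕ) (e f : Fin n → E), Orthonormal ℂ e → Orthonormal ℂ f →
      ∑ i, ‖⟪e i, A (f i)⟫_ℂ‖ ≤ c) :
    traceNorm A ≤ ENNReal.ofReal c :=
  iSup_le fun n => iSup₂_le fun e f => iSup₂_le fun he hf =>
    ENNReal.ofReal_le_ofReal (h n e f he hf)

theorem sum_re_inner_le_opTrace {γ : E →L[ℂ] E} (hγtr : opTrace γ ≠ ⊤) {n : ℕ}
    {e : Fin n → E} (he : Orthonormal ℂ e) :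
    ∑ i, (⟪e i, γ (e i)⟫_ℂ).re ≤ (opTrace γ).toReal :=
  (ENNReal.ofReal_le_iff_le_toReal hγtr).1 <| le_iSup₂_of_le n e <| le_iSup_of_le he le_rfl

theorem re_inner_apply_le_opTrace {γ : E →L[ℂ] E} (hγtr : opTrace γ ≠ ⊤) {φ : E}
    (hφ : ‖φ‖ = 1) : (⟪φ, γ φ⟫_ℂ).re ≤ (opTrace γ).toReal := by
  simpa using sum_re_inner_le_opTrace hγtr (orthonormal_vec_singleton hφ)

theorem re_inner_apply_le_of_inner_eq_zero {γ : E →L[ℂ] E} (hγtr : opTrace γ ≠ ⊤) {φ w : E}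
    (hφ : ‖φ‖ = 1) (hw : ⟪φ, w⟫_ℂ = 0) :
    (⟪w, γ w⟫_ℂ).re ≤ ‖w‖ ^ 2 * ((opTrace γ).toReal - (⟪φ, γ φ⟫_ℂ).re) := by
  rcases eq_or_ne w 0 with rfl | hw0
  · simp
  have hn : ‖w‖ ≠ 0 := norm_ne_zero_iff.2 hw0
  obtain ⟨χ, hχ_def⟩ : ∃ χ : E, χ = ((‖w‖⁻¹ : ℝ) : ℂ) • w := ⟨_, rfl⟩
  have hχ : ‖χ‖ = 1 := by simp [hχ_def, norm_smul, inv_mul_cancel₀ hn]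
  have hpair := sum_re_inner_le_opTrace hγtr <|
    (orthonormal_vec_singleton hφ).snoc hχ fun _ => by simp [hχ_def, inner_smul_right, hw]
  simp only [Fin.sum_univ_castSucc, Fin.snoc_castSucc, Fin.snoc_last, hχ_def, map_smul,
    inner_smul_left, inner_smul_right, Complex.conj_ofReal, ← mul_assoc, ← Complex.ofReal_mul,
    Complex.re_ofReal_mul] at hpair
  calc (⟪w, γ w⟫_ℂ).re = ‖w‖ ^ 2 * (‖w‖⁻¹ * ‖w‖⁻¹ * (⟪w, γ w⟫_ℂ).re) := by field_simp
    _ ≤ ‖w‖ ^ 2 * ((opTrace γ).toReal - (⟪φ, γ φ⟫_ℂ).re) := by gcongr; simp at hpair; linarith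

end

section Sqrt

variable {B : H →L[ℂ] H}

theorem inner_apply_eq_inner_sqrt (hB : 0 ≤ B) (x y : H) :
    ⟪x, B y⟫_ℂ = ⟪CFC.sqrt B x, CFC.sqrt B y⟫_ℂ := by
  conv_lhs => rw [← CFC.sqrt_mul_sqrt_self B hB]
  rw [mul_apply_eq_comp, ← ContinuousLinearMap.adjoint_inner_left,
    (CFC.sqrt_nonneg B).isSelfAdjoint.adjoint_eq]

theorem sq_norm_sqrt_apply (hB : 0 ≤ B) (x : H) :
    ‖CFC.sqrt B x‖ ^ 2 = (⟪x, B x⟫_ℂ).re := by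
  rw [inner_apply_eq_inner_sqrt hB, inner_self_eq_norm_sq_to_K]
  norm_cast

theorem re_inner_apply_self_nonneg (hB : 0 ≤ B) (x : H) : 0 ≤ (⟪x, B x⟫_ℂ).re :=
  sq_norm_sqrt_apply hB x ▸ sq_nonneg _

theorem apply_eq_zero_of_re_inner_eq_zero (hB : 0 ≤ B) {x : H} (hx : (⟪x, B x⟫_ℂ).re = 0) :
    B x = 0 := by
  have : CFC.sqrt B x = 0 := by
    rw [← sq_norm_sqrt_apply hB] at hx
    exact norm_eq_zero.1 (pow_eq_zero_iff two_ne_zero |>.1 hx)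
  rw [← CFC.sqrt_mul_sqrt_self B hB, mul_apply_eq_comp, this, map_zero]

theorem sum_norm_inner_apply_le_sqrt_mul_sqrt {ι : Type*} [Fintype ι] (hB : 0 ≤ B)
    (e f : ι → H) :
    ∑ i, ‖⟪e i, B (f i)⟫_ℂ‖ ≤
      √(∑ i, (⟪e i, B (e i)⟫_ℂ).re) * √(∑ i, (⟪f i, B (f i)⟫_ℂ).re) := by
  simp only [← sq_norm_sqrt_apply hB]
  simp only [inner_apply_eq_inner_sqrt hB]
  exact (Finset.sum_le_sum fun i _ => norm_inner_le_norm _ _).trans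
    (Real.sum_mul_le_sqrt_mul_sqrt _ _ _)

end Sqrt

theorem isSelfAdjoint_projOp (φ : H) : IsSelfAdjoint (projOp φ) := by
  rw [ContinuousLinearMap.isSelfAdjoint_iff_isSymmetric]
  intro x y
  simp only [ContinuousLinearMap.coe_coe, projOp_apply, inner_smul_left, inner_smul_right,
    inner_conj_symm]
  ring

theorem IsSelfAdjoint.eq_smul_projOp {B : H →L[ℂ] H} (hB : IsSelfAdjoint B) {ψ : H}
    (hψ : ‖ψ‖ = 1) (h : ∀ u, ∃ t : ℂ, B u = t • ψ) :
    B = ((⟪ψ, B ψ⟫_ℂ).re : ℂ) • projOp ψ := by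
  have hψψ : ⟪ψ, ψ⟫_ℂ = 1 := by simp [inner_self_eq_norm_sq_to_K, hψ]
  have hB_eq : ∀ u, B u = ⟪ψ, B u⟫_ℂ • ψ := fun u => by
    obtain ⟨t, ht⟩ := h u
    rw [ht, inner_smul_right, hψψ, mul_one]
  have hre : (((⟪ψ, B ψ⟫_ℂ).re : ℝ) : ℂ) = ⟪ψ, B ψ⟫_ℂ :=
    hB.isSymmetric.coe_re_inner_self_apply ψ
  ext u
  rw [smul_apply, projOp_apply, smul_smul, hB_eq u, ← hB.isSymmetric.apply_clm]
  conv_lhs => rw [hB_eq ψ, inner_smul_left, ← hre, Complex.conj_ofReal]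

theorem sq_norm_inner_sub_re_inner_apply_le {γ : H →L[ℂ] H} (hγ : 0 ≤ γ)
    (hγtr : opTrace γ ≠ ⊤) {φ x : H} (hφ : ‖φ‖ = 1) (hx : ‖x‖ = 1) :
    ‖⟪φ, x⟫_ℂ‖ ^ 2 - (⟪x, γ x⟫_ℂ).re ≤
      √(opTrace γ).toReal * √((opTrace γ).toReal - (⟪φ, γ φ⟫_ℂ).re)
        + max (1 - (opTrace γ).toReal) 0 := by
  set T := (opTrace γ).toReal
  set a := (⟪φ, γ φ⟫_ℂ).re
  set S := CFC.sqrt γ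
  set c := ⟪φ, x⟫_ℂ
  obtain ⟨w, hw_def⟩ : ∃ w, w = x - c • φ := ⟨_, rfl⟩
  have hφw : ⟪φ, w⟫_ℂ = 0 := by
    rw [hw_def, inner_sub_right, inner_smul_right, inner_self_eq_norm_sq_to_K, hφ]
    simp [c]
  have hcw : ‖c‖ ^ 2 + ‖w‖ ^ 2 = 1 := by
    have := norm_add_sq_eq_norm_sq_add_norm_sq_of_inner_eq_zero (c • φ) w
      (by rw [inner_smul_left, hφw, mul_zero])
    rw [hw_def, add_sub_cancel, hx, norm_smul, hφ, ← hw_def] at this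
    linear_combination -this
  have hT : 0 ≤ T := ENNReal.toReal_nonneg
  have hSφ : ‖S φ‖ ^ 2 = a := sq_norm_sqrt_apply hγ φ
  have ha : 0 ≤ a := hSφ ▸ sq_nonneg _
  have haT : a ≤ T := re_inner_apply_le_opTrace hγtr hφ
  have hScφ : ‖S (c • φ)‖ = ‖c‖ * √a := by
    rw [map_smul, norm_smul, ← hSφ, Real.sqrt_sq (norm_nonneg _)]
  have hSw : ‖S w‖ ≤ ‖w‖ * √(T - a) := by
    rw [← Real.sqrt_sq (norm_nonneg (S w)), sq_norm_sqrt_apply hγ,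
      ← Real.sqrt_sq (norm_nonneg w), ← Real.sqrt_mul (sq_nonneg _)]
    exact Real.sqrt_le_sqrt (re_inner_apply_le_of_inner_eq_zero hγtr hφ hφw)
  have hSx : (‖c‖ * √a - ‖S w‖) ^ 2 ≤ (⟪x, γ x⟫_ℂ).re := by
    rw [← sq_norm_sqrt_apply hγ, ← sq_abs, ← hScφ, ← norm_neg (S w)]
    have : x = c • φ + w := by rw [hw_def, add_sub_cancel]
    refine pow_le_pow_left₀ (abs_nonneg _) ?_ 2
    simpa [this, sub_neg_eq_add] using abs_norm_sub_norm_le (S (c • φ)) (-S w)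
  have := sq_sub_sq_sub_le (norm_nonneg c) (Real.sqrt_nonneg a) (Real.sqrt_nonneg (T - a))
    (Real.sqrt_nonneg T) hcw
    (by rw [Real.sq_sqrt ha, Real.sq_sqrt (sub_nonneg.2 haT), Real.sq_sqrt hT]; ring) hSw
  rw [Real.sq_sqrt hT] at this
  linarith

section NegPart

variable {γ : H →L[ℂ] H} {φ ψ : H} {μ : ℝ}

theorem negPart_sub_projOp_apply_eq_zero (hγ : 0 ≤ γ) {u : H}
    (hu : ⟪φ, (γ - projOp φ)⁻ u⟫_ℂ = 0) : (γ - projOp φ)⁻ u = 0 := by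
  set A := γ - projOp φ
  have hA : IsSelfAdjoint A := hγ.isSelfAdjoint.sub (isSelfAdjoint_projOp φ)
  set v := A⁻ u
  have hposv : A⁺ v = 0 := by
    rw [← mul_apply_eq_comp, CFC.posPart_mul_negPart, zero_apply]
  have hAv : (⟪v, A v⟫_ℂ).re = (⟪v, γ v⟫_ℂ).re := by
    rw [sub_apply, inner_sub_right, Complex.sub_re, re_inner_projOp_self, hu]
    simp
  have hnegv : (⟪v, A⁻ v⟫_ℂ).re = 0 := by
    rw [← CFC.posPart_sub_negPart A hA, sub_apply, hposv, zero_sub, inner_neg_right,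
      Complex.neg_re] at hAv
    linarith [re_inner_apply_self_nonneg hγ v,
      re_inner_apply_self_nonneg (CFC.negPart_nonneg A) v]
  have := apply_eq_zero_of_re_inner_eq_zero (CFC.negPart_nonneg A) hnegv
  rw [← inner_self_eq_zero (𝕜 := ℂ)]
  calc ⟪A⁻ u, v⟫_ℂ = ⟪u, A⁻ v⟫_ℂ :=
        (CFC.negPart_nonneg A).isSelfAdjoint.isSymmetric.apply_clm u v
    _ = 0 := by rw [this, inner_zero_right]

theorem exists_negPart_sub_projOp_eq_smul (hγ : 0 ≤ γ) (hφ : ‖φ‖ = 1) :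
    ∃ (ψ : H) (μ : ℝ), ‖ψ‖ = 1 ∧ 0 ≤ μ ∧ (γ - projOp φ)⁻ = (μ : ℂ) • projOp ψ := by
  set A := γ - projOp φ
  have hR : ∀ u, ⟪φ, A⁻ u⟫_ℂ = 0 → A⁻ u = 0 := fun u => negPart_sub_projOp_apply_eq_zero hγ
  by_cases hz : ∀ u, A⁻ u = 0
  · exact ⟨φ, 0, hφ, le_rfl, by ext u; simp [hz u]⟩
  push Not at hz
  obtain ⟨u₀, hu₀⟩ := hz
  have hφv : ⟪φ, A⁻ u₀⟫_ℂ ≠ 0 := fun h => hu₀ (hR u₀ h)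
  have hn : ‖A⁻ u₀‖ ≠ 0 := norm_ne_zero_iff.2 hu₀
  obtain ⟨ψ, hψ_def⟩ : ∃ ψ : H, ψ = ((‖A⁻ u₀‖⁻¹ : ℝ) : ℂ) • A⁻ u₀ := ⟨_, rfl⟩
  have hψ : ‖ψ‖ = 1 := by simp [hψ_def, norm_smul, inv_mul_cancel₀ hn]
  have hline : ∀ u, ∃ t : ℂ, A⁻ u = t • ψ := fun u =>
    ⟨⟪φ, A⁻ u⟫_ℂ / ⟪φ, A⁻ u₀⟫_ℂ * ‖A⁻ u₀‖, by
      rw [hψ_def, smul_smul, mul_assoc, ← Complex.ofReal_mul, mul_inv_cancel₀ hn,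
        Complex.ofReal_one, mul_one]
      exact apply_eq_smul_of_inner_apply_eq_zero hR hφv u⟩
  exact ⟨ψ, _, hψ, re_inner_apply_self_nonneg (CFC.negPart_nonneg A) ψ,
    (CFC.negPart_nonneg A).isSelfAdjoint.eq_smul_projOp hψ hline⟩

theorem re_inner_apply_eq_neg_of_negPart_eq {A : H →L[ℂ] H} (hA : IsSelfAdjoint A)
    (hψ : ‖ψ‖ = 1) (hμ : μ ≠ 0) (h : A⁻ = (μ : ℂ) • projOp ψ) :
    (⟪ψ, A ψ⟫_ℂ).re = -μ := by
  have hψψ : ⟪ψ, ψ⟫_ℂ = 1 := by simp [inner_self_eq_norm_sq_to_K, hψ]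
  have hneg : A⁻ ψ = (μ : ℂ) • ψ := by rw [h, smul_apply, projOp_apply, hψψ, one_smul]
  have hpos : A⁺ ψ = 0 := by
    have : A⁺ (A⁻ ψ) = 0 := by rw [← mul_apply_eq_comp, CFC.posPart_mul_negPart, zero_apply]
    rw [hneg, map_smul] at this
    exact (smul_eq_zero.1 this).resolve_left (by exact_mod_cast hμ)
  rw [← CFC.posPart_sub_negPart A hA, sub_apply, hpos, hneg, zero_sub, inner_neg_right,
    inner_smul_right, hψψ]
  simp

theorem le_of_negPart_sub_projOp_eq_smul (hγ : 0 ≤ γ) (hγtr : opTrace γ ≠ ⊤)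
    (hφ : ‖φ‖ = 1) (hψ : ‖ψ‖ = 1) (h : (γ - projOp φ)⁻ = (μ : ℂ) • projOp ψ) :
    μ ≤ √(opTrace γ).toReal * √((opTrace γ).toReal - (⟪φ, γ φ⟫_ℂ).re)
      + max (1 - (opTrace γ).toReal) 0 := by
  rcases eq_or_ne μ 0 with rfl | hμ
  · positivity
  have hψA := re_inner_apply_eq_neg_of_negPart_eq (hγ.isSelfAdjoint.sub (isSelfAdjoint_projOp φ))
    hψ hμ h
  rw [sub_apply, inner_sub_right, Complex.sub_re, re_inner_projOp_self] at hψA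
  linarith [sq_norm_inner_sub_re_inner_apply_le hγ hγtr hφ hψ]

theorem sum_re_inner_posPart_le (hγ : IsSelfAdjoint γ) (hγtr : opTrace γ ≠ ⊤)
    (hφ : ‖φ‖ = 1) (hψ : ‖ψ‖ = 1) (h : (γ - projOp φ)⁻ = (μ : ℂ) • projOp ψ) {n : ℕ}
    {e : Fin n → H} (he : Orthonormal ℂ e) :
    ∑ i, (⟪e i, (γ - projOp φ)⁺ (e i)⟫_ℂ).re ≤ (opTrace γ).toReal - 1 + μ := by
  set A := γ - projOp φ
  have hA : IsSelfAdjoint A := hγ.sub (isSelfAdjoint_projOp φ)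
  have hdiag : ∀ x, (⟪x, A⁺ x⟫_ℂ).re
      = (⟪x, γ x⟫_ℂ).re - ‖⟪φ, x⟫_ℂ‖ ^ 2 + μ * ‖⟪ψ, x⟫_ℂ‖ ^ 2 := fun x => by
    rw [sub_eq_iff_eq_add.1 (CFC.posPart_sub_negPart A hA), add_apply, h, sub_apply, smul_apply,
      inner_add_right, inner_sub_right, inner_smul_right, Complex.add_re, Complex.sub_re,
      Complex.re_ofReal_mul, re_inner_projOp_self, re_inner_projOp_self]
  -- Extend `e` until `φ` lies in its span, so that the `|φ⟩⟨φ|` part contributes exactly `-1`.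
  obtain ⟨m, g, hg, hφg, hle⟩ := he.exists_extension_sq_norm_le_sum φ
  have hφg' : 1 ≤ ∑ j, ‖⟪φ, g j⟫_ℂ‖ ^ 2 := by simpa [hφ, norm_inner_symm φ] using hφg
  have hψg : ∑ j, ‖⟪ψ, g j⟫_ℂ‖ ^ 2 ≤ 1 := by
    simpa [hψ, norm_inner_symm ψ] using hg.sum_inner_products_le ψ
  have hμ : 0 ≤ μ := by
    simpa [h, hψ] using re_inner_apply_self_nonneg (CFC.negPart_nonneg A) ψ
  calc ∑ i, (⟪e i, A⁺ (e i)⟫_ℂ).re ≤ ∑ j, (⟪g j, A⁺ (g j)⟫_ℂ).re :=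
        hle (fun v => (⟪v, A⁺ v⟫_ℂ).re) (re_inner_apply_self_nonneg (CFC.posPart_nonneg A))
    _ = ∑ j, (⟪g j, γ (g j)⟫_ℂ).re - ∑ j, ‖⟪φ, g j⟫_ℂ‖ ^ 2 + μ * ∑ j, ‖⟪ψ, g j⟫_ℂ‖ ^ 2 := by
        simp only [hdiag, Finset.sum_add_distrib, Finset.sum_sub_distrib, Finset.mul_sum]
    _ ≤ (opTrace γ).toReal - 1 + μ * 1 := by
        gcongr
        exact sum_re_inner_le_opTrace hγtr hg
    _ = (opTrace γ).toReal - 1 + μ := by rw [mul_one]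

theorem sum_norm_inner_sub_projOp_le (hγ : IsSelfAdjoint γ) (hγtr : opTrace γ ≠ ⊤)
    (hφ : ‖φ‖ = 1) (hψ : ‖ψ‖ = 1) (hμ : 0 ≤ μ) (h : (γ - projOp φ)⁻ = (μ : ℂ) • projOp ψ)
    {n : ℕ} {e f : Fin n → H} (he : Orthonormal ℂ e) (hf : Orthonormal ℂ f) :
    ∑ i, ‖⟪e i, (γ - projOp φ) (f i)⟫_ℂ‖ ≤ max ((opTrace γ).toReal - 1 + μ) 0 + μ := by
  set A := γ - projOp φ
  have hA : IsSelfAdjoint A := hγ.sub (isSelfAdjoint_projOp φ)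
  set M := max ((opTrace γ).toReal - 1 + μ) 0
  have hsplit : ∀ i, ‖⟪e i, A (f i)⟫_ℂ‖ ≤ ‖⟪e i, A⁺ (f i)⟫_ℂ‖ + ‖⟪e i, A⁻ (f i)⟫_ℂ‖ := by
    intro i
    have : A (f i) = A⁺ (f i) - A⁻ (f i) := by rw [← sub_apply, CFC.posPart_sub_negPart A hA]
    rw [this, inner_sub_right]
    exact norm_sub_le _ _
  have hposM : ∀ {g : Fin n → H}, Orthonormal ℂ g → ∑ i, (⟪g i, A⁺ (g i)⟫_ℂ).re ≤ M :=
    fun hg => (sum_re_inner_posPart_le hγ hγtr hφ hψ h hg).trans (le_max_left _ _)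
  have hpos : ∑ i, ‖⟪e i, A⁺ (f i)⟫_ℂ‖ ≤ M :=
    calc _ ≤ _ := sum_norm_inner_apply_le_sqrt_mul_sqrt (CFC.posPart_nonneg A) e f
      _ ≤ √M * √M := by gcongr; exacts [hposM he, hposM hf]
      _ = M := Real.mul_self_sqrt (le_max_right _ _)
  have hneg : ∑ i, ‖⟪e i, A⁻ (f i)⟫_ℂ‖ ≤ μ := by
    simp only [h, smul_apply, inner_smul_right, norm_mul, Complex.norm_real,
      Real.norm_of_nonneg hμ, ← Finset.mul_sum]
    calc μ * ∑ i, ‖⟪e i, projOp ψ (f i)⟫_ℂ‖ ≤ μ * ‖ψ‖ ^ 2 :=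
          mul_le_mul_of_nonneg_left (sum_norm_inner_projOp_le he hf ψ) hμ
      _ = μ := by rw [hψ, one_pow, mul_one]
  calc ∑ i, ‖⟪e i, A (f i)⟫_ℂ‖ ≤ ∑ i, (‖⟪e i, A⁺ (f i)⟫_ℂ‖ + ‖⟪e i, A⁻ (f i)⟫_ℂ‖) :=
        Finset.sum_le_sum fun i _ => hsplit i
    _ ≤ M + μ := by rw [Finset.sum_add_distrib]; exact add_le_add hpos hneg

end NegPart

/-- For a nonnegative trace-class `γ` and a unit vector `φ`,
`‖γ - |φ⟩⟨φ|‖₁ ≤ 2√(Tr γ)√(Tr γ - ⟨φ,γφ⟩) + |Tr γ - 1|`; in particular if `Tr γ = 1` then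
`‖γ - |φ⟩⟨φ|‖₁ ≤ 2√(1 - ⟨φ,γφ⟩)`. -/
theorem trace_norm_bound_near_projection
    (γ : H →L[ℂ] H) (hγpos : γ.IsPositive) (hγtr : opTrace γ ≠ ⊤)
    (φ : H) (hφ : ‖φ‖ = 1) :
    traceNorm (γ - projOp φ)
        ≤ ENNReal.ofReal
          (2 * Real.sqrt ((opTrace γ).toReal)
              * Real.sqrt ((opTrace γ).toReal - (⟪φ, γ φ⟫_ℂ).re)
            + |(opTrace γ).toReal - 1|) ∧
      (opTrace γ = 1 →
        traceNorm (γ - projOp φ)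
          ≤ ENNReal.ofReal (2 * Real.sqrt (1 - (⟪φ, γ φ⟫_ℂ).re))) := by
  have hγ : 0 ≤ γ := (ContinuousLinearMap.nonneg_iff_isPositive γ).2 hγpos
  obtain ⟨ψ, μ, hψ, hμ, hneg⟩ := exists_negPart_sub_projOp_eq_smul hγ hφ
  have hμle := le_of_negPart_sub_projOp_eq_smul hγ hγtr hφ hψ hneg
  have key := traceNorm_le_ofReal fun n e f he hf =>
    (sum_norm_inner_sub_projOp_le hγ.isSelfAdjoint hγtr hφ hψ hμ hneg he hf).trans
      (max_add_le_two_mul_add_abs (by positivity) hμle)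
  rw [← mul_assoc] at key
  exact ⟨key, fun h1 => by simpa [h1] using key⟩

end
end
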